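/- arXiv:2408.05766 — 2 statements merged into one kernel-verified Lean document; each statement's English description precedes it below -/
import Mathlib

section
/- Let u₁, …, u_r ∈ ℤ² be vectors generating a finite-index subgroup L of ℤ². Then the index [ℤ² : L] equals gcd over all pairs i < j of |det(u_i, u_j)|. -/
/-- The 2×2 determinant of two vectors in `ℤ²`. -/
def dd (v w : Fin 2 → ℤ) : ℤ := v 0 * w 1 - v 1 * w 0

lemma fin2_cases (x : Fin 2) : x = 0 ∨ x = 1 := by omega

/-- If `u₁, …, u_r ∈ ℤ²` generate a finite-index subgroup `L`, then the index
`[ℤ² : L]` equals the gcd of `|det (u_i, u_j)|` over all pairs `i < j`. -/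
theorem stmt_6 (r : ℕ) (u : Fin r → (Fin 2 → ℤ))
    (L : AddSubgroup (Fin 2 → ℤ)) (hL : L = AddSubgroup.closure (Set.range u))
    (hfin : L.index ≠ 0) :
    L.index = (Finset.univ.filter (fun p : Fin r × Fin r => p.1 < p.2)).gcd
      (fun p => (Matrix.det !![u p.1 0, u p.2 0; u p.1 1, u p.2 1]).natAbs) := by
  classical
  subst hL
  set N : Submodule ℤ (Fin 2 → ℤ) := Submodule.span ℤ (Set.range u) with hNdef
  have hNL : N.toAddSubgroup = AddSubgroup.closure (Set.range u) :=
    Submodule.span_int_eq_addSubgroupClosure _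
  rw [← hNL] at hfin ⊢
  -- rewrite the gcd function in terms of `dd`
  have hgcd : (Finset.univ.filter (fun p : Fin r × Fin r => p.1 < p.2)).gcd
      (fun p => (Matrix.det !![u p.1 0, u p.2 0; u p.1 1, u p.2 1]).natAbs) =
      (Finset.univ.filter (fun p : Fin r × Fin r => p.1 < p.2)).gcd
      (fun p => (dd (u p.1) (u p.2)).natAbs) := by
    refine Finset.gcd_congr rfl fun p _ => ?_
    rw [Matrix.det_fin_two_of, dd]
    ring_nf
  rw [hgcd]
  set g : ℕ := (Finset.univ.filter (fun p : Fin r × Fin r => p.1 < p.2)).gcd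
      (fun p => (dd (u p.1) (u p.2)).natAbs) with hgdef
  -- Smith normal form
  obtain ⟨n, snf⟩ := N.smithNormalForm (Pi.basisFun ℤ (Fin 2))
  have hn : n = 2 := by
    have := snf.toAddSubgroup_index_ne_zero_iff.mp hfin
    simpa using this
  subst hn
  -- the index in terms of the Smith coefficients
  have hidx : N.toAddSubgroup.index = (snf.a 0).natAbs * (snf.a 1).natAbs := by
    rw [snf.toAddSubgroup_index_eq_pow_mul_prod]
    simp [Fin.prod_univ_two, Nat.card_eq_zero_of_infinite]
  -- the basis vectors of N
  set w : Fin 2 → (Fin 2 → ℤ) := fun i => (snf.bN i : Fin 2 → ℤ) with hwdef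
  have hw : ∀ i, w i = snf.a i • snf.bM (snf.f i) := fun i => snf.snf i
  -- |det bM| = 1
  have hMunit : IsUnit ((Pi.basisFun ℤ (Fin 2)).det ⇑snf.bM) :=
    (Pi.basisFun ℤ (Fin 2)).isUnit_det snf.bM
  have hMdet : (Pi.basisFun ℤ (Fin 2)).det ⇑snf.bM =
      snf.bM 0 0 * snf.bM 1 1 - snf.bM 1 0 * snf.bM 0 1 := by
    rw [Module.Basis.det_apply, Matrix.det_fin_two]
    simp [Module.Basis.toMatrix_apply]
  have hMnat : (dd (snf.bM (snf.f 0)) (snf.bM (snf.f 1))).natAbs = 1 := by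
    have hf : snf.f 0 ≠ snf.f 1 := snf.f.injective.ne (by decide)
    have hval : ((Pi.basisFun ℤ (Fin 2)).det ⇑snf.bM).natAbs = 1 := by
      rcases Int.isUnit_iff.mp hMunit with h | h <;> rw [h] <;> rfl
    rcases fin2_cases (snf.f 0) with h0 | h0 <;> rcases fin2_cases (snf.f 1) with h1 | h1 <;>
      rw [h0, h1] at hf ⊢
    · exact absurd rfl hf
    · have h : dd (snf.bM 0) (snf.bM 1) = (Pi.basisFun ℤ (Fin 2)).det ⇑snf.bM := by
        simp only [dd]; rw [hMdet]; ring
      rw [h, hval]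
    · have h : dd (snf.bM 1) (snf.bM 0) = -((Pi.basisFun ℤ (Fin 2)).det ⇑snf.bM) := by
        simp only [dd]; rw [hMdet]; ring
      rw [h, Int.natAbs_neg, hval]
    · exact absurd rfl hf
  -- the index equals |dd (w 0) (w 1)|
  have hD : dd (w 0) (w 1) =
      snf.a 0 * snf.a 1 * dd (snf.bM (snf.f 0)) (snf.bM (snf.f 1)) := by
    simp only [dd, hw, Pi.smul_apply, smul_eq_mul]
    ring
  have hDidx : N.toAddSubgroup.index = (dd (w 0) (w 1)).natAbs := by
    rw [hD, Int.natAbs_mul, Int.natAbs_mul, hMnat, hidx, mul_one]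
  -- membership of the u i in N
  have hmem : ∀ i, u i ∈ N := fun i => Submodule.subset_span (Set.mem_range_self i)
  -- coordinates of u i with respect to the basis of N
  set c : Fin r → Fin 2 → ℤ := fun i k => snf.bN.repr ⟨u i, hmem i⟩ k with hcdef
  have hrep : ∀ i k, u i k = c i 0 * w 0 k + c i 1 * w 1 k := by
    intro i k
    have := snf.bN.sum_repr ⟨u i, hmem i⟩
    have h2 := congrArg (fun m : N => (m : Fin 2 → ℤ) k) this
    rw [Fin.sum_univ_two] at h2
    simpa [Fin.sum_univ_two, hcdef, hwdef] using h2.symm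
  -- each dd (u i) (u j) is a multiple of dd (w 0) (w 1)
  have hdvd : ∀ i j, dd (w 0) (w 1) ∣ dd (u i) (u j) := by
    intro i j
    refine ⟨c i 0 * c j 1 - c i 1 * c j 0, ?_⟩
    simp only [dd, hrep]
    ring
  -- index divides g
  have hig : N.toAddSubgroup.index ∣ g := by
    refine Finset.dvd_gcd fun p _ => ?_
    rw [hDidx]
    exact Int.natAbs_dvd_natAbs.mpr (hdvd p.1 p.2)
  -- g divides dd (u i) (u j) for all i j
  have hgd : ∀ i j, (g : ℤ) ∣ dd (u i) (u j) := by
    intro i j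
    rcases lt_trichotomy i j with h | h | h
    · have : g ∣ (dd (u i) (u j)).natAbs :=
        Finset.gcd_dvd (by simp [Finset.mem_filter, h] : (i, j) ∈
          Finset.univ.filter (fun p : Fin r × Fin r => p.1 < p.2))
      exact Int.natCast_dvd_natCast.mpr this |>.trans (Int.natAbs_dvd.mpr dvd_rfl)
    · subst h
      have : dd (u i) (u i) = 0 := by simp [dd]; ring
      simp [this]
    · have : g ∣ (dd (u j) (u i)).natAbs :=
        Finset.gcd_dvd (by simp [Finset.mem_filter, h] : (j, i) ∈
          Finset.univ.filter (fun p : Fin r × Fin r => p.1 < p.2))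
      have h2 : (g : ℤ) ∣ dd (u j) (u i) :=
        Int.natCast_dvd_natCast.mpr this |>.trans (Int.natAbs_dvd.mpr dvd_rfl)
      have h3 : dd (u i) (u j) = -dd (u j) (u i) := by simp [dd]; ring
      rw [h3]
      exact h2.neg_right
  -- w 0 and w 1 are in the span of the u i
  have hwN : ∀ k : Fin 2, ∃ α : Fin r → ℤ, ∑ i, α i • u i = w k := by
    intro k
    have : w k ∈ N := (snf.bN k).2
    rwa [hNdef, Submodule.mem_span_range_iff_exists_fun ℤ] at this
  obtain ⟨α, hα⟩ := hwN 0
  obtain ⟨β, hβ⟩ := hwN 1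
  have hαk : ∀ k, w 0 k = ∑ i, α i * u i k := by
    intro k
    rw [← hα]
    simp [Finset.sum_apply]
  have hβk : ∀ k, w 1 k = ∑ i, β i * u i k := by
    intro k
    rw [← hβ]
    simp [Finset.sum_apply]
  have hexpand : dd (w 0) (w 1) = ∑ i, ∑ j, α i * β j * dd (u i) (u j) := by
    simp only [dd]
    rw [hαk 0, hαk 1, hβk 0, hβk 1, Finset.sum_mul_sum, Finset.sum_mul_sum,
      ← Finset.sum_sub_distrib]
    refine Finset.sum_congr rfl fun i _ => ?_
    rw [← Finset.sum_sub_distrib]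
    refine Finset.sum_congr rfl fun j _ => ?_
    ring
  have hgD : (g : ℤ) ∣ dd (w 0) (w 1) := by
    rw [hexpand]
    exact Finset.dvd_sum fun i _ => Finset.dvd_sum fun j _ => (hgd i j).mul_left _
  have hgi : g ∣ N.toAddSubgroup.index := by
    rw [hDidx]
    exact Int.natCast_dvd_natCast.mp ((Int.dvd_natAbs.mpr hgD))
  exact Nat.dvd_antisymm hig hgi
end

section
/- Let S = Cone(e₁, −e₁+e₂) ∪ Cone(e₁, −e₁−e₂) ⊆ ℝ². Then {u ∈ ℝ² : S + u ⊆ S} = Cone(e₁+e₂, e₁−e₂). -/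
/-- The cone generated by two vectors in `ℝ²`: all nonnegative combinations. -/
def cone2 (v w : Fin 2 → ℝ) : Set (Fin 2 → ℝ) :=
  {x | ∃ a b : ℝ, 0 ≤ a ∧ 0 ≤ b ∧ x = a • v + b • w}

lemma mem_coneA (x : Fin 2 → ℝ) :
    x ∈ cone2 ![1, 0] ![-1, 1] ↔ 0 ≤ x 1 ∧ 0 ≤ x 0 + x 1 := by
  constructor
  · rintro ⟨a, b, ha, hb, rfl⟩
    simp [Matrix.cons_val_zero, Matrix.cons_val_one]
    constructor <;> nlinarith
  · rintro ⟨h1, h2⟩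
    exact ⟨x 0 + x 1, x 1, h2, h1, by
      funext i; fin_cases i <;> simp <;> ring⟩

lemma mem_coneB (x : Fin 2 → ℝ) :
    x ∈ cone2 ![1, 0] ![-1, -1] ↔ x 1 ≤ 0 ∧ 0 ≤ x 0 - x 1 := by
  constructor
  · rintro ⟨a, b, ha, hb, rfl⟩
    simp [Matrix.cons_val_zero, Matrix.cons_val_one]
    constructor <;> nlinarith
  · rintro ⟨h1, h2⟩
    exact ⟨x 0 - x 1, -x 1, h2, by linarith, by
      funext i; fin_cases i <;> simp <;> ring⟩

lemma mem_coneC (x : Fin 2 → ℝ) :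
    x ∈ cone2 ![1, 1] ![1, -1] ↔ x 1 ≤ x 0 ∧ -x 1 ≤ x 0 := by
  constructor
  · rintro ⟨a, b, ha, hb, rfl⟩
    simp [Matrix.cons_val_zero, Matrix.cons_val_one]
    constructor <;> nlinarith
  · rintro ⟨h1, h2⟩
    exact ⟨(x 0 + x 1) / 2, (x 0 - x 1) / 2, by linarith, by linarith, by
      funext i; fin_cases i <;> simp <;> ring⟩

/-- For `S = Cone(e₁, -e₁+e₂) ∪ Cone(e₁, -e₁-e₂)`, the set of `u` with
`S + u ⊆ S` is exactly `Cone(e₁+e₂, e₁-e₂)`. -/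
theorem stmt_14 (S : Set (Fin 2 → ℝ))
    (hS : S = cone2 ![1, 0] ![-1, 1] ∪ cone2 ![1, 0] ![-1, -1]) :
    {u : Fin 2 → ℝ | ∀ x ∈ S, x + u ∈ S} = cone2 ![1, 1] ![1, -1] := by
  subst hS
  ext u
  simp only [Set.mem_setOf_eq, Set.mem_union, mem_coneA, mem_coneB, mem_coneC,
    Pi.add_apply]
  constructor
  · intro h
    set t : ℝ := |u 1| + 1 with ht
    have ht0 : 0 < t := by positivity
    have htu : |u 1| < t := by simp [ht]
    have h1 := h ![-t, t] (Or.inl (by simp; linarith))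
    have h2 := h ![-t, -t] (Or.inr (by simp; linarith))
    have hb1 : 0 ≤ u 0 + u 1 := by
      rcases h1 with h1 | h1 <;> simp [Matrix.cons_val_zero, Matrix.cons_val_one] at h1
      · linarith [h1.2]
      · exfalso; have := abs_lt.mp htu; linarith [h1.1]
    have hb2 : 0 ≤ u 0 - u 1 := by
      rcases h2 with h2 | h2 <;> simp [Matrix.cons_val_zero, Matrix.cons_val_one] at h2
      · exfalso; have := abs_lt.mp htu; linarith [h2.1]
      · linarith [h2.2]
    exact ⟨by linarith, by linarith⟩
  · rintro ⟨hu1, hu2⟩ x hx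
    rcases hx with ⟨hx1, hx2⟩ | ⟨hx1, hx2⟩
    · rcases le_or_gt 0 (x 1 + u 1) with hy | hy
      · exact Or.inl ⟨hy, by linarith⟩
      · exact Or.inr ⟨le_of_lt hy, by linarith⟩
    · rcases le_or_gt (x 1 + u 1) 0 with hy | hy
      · exact Or.inr ⟨hy, by linarith⟩
      · exact Or.inl ⟨le_of_lt hy, by linarith⟩
end
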